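/- arXiv:2104.05285 — 2 statements merged into one kernel-verified Lean document; each statement's English description precedes it below -/
import Mathlib

section
/- Let J be a finite set with n ≥ 1 a natural number, let χ : J × J → {0, 1}, and let π : J → ℝ satisfy, for all i, j ∈ J with i ≠ j, the Miller–Tucker–Zemlin inequality π(j) ≥ π(i) + 1 − n·(1 − χ(i, j)). Then the directed graph on J with edge set E = {(i, j) : i ≠ j and χ(i, j) = 1} contains no directed cycle; that is, there is no finite sequence of vertices j₀, j₁, …, j_k in J with k ≥ 1, j_k = j₀, j_m ≠ j_{m+1}, and χ(j_m, j_{m+1}) = 1 for all 0 ≤ m < k. -/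
theorem mtz_soundness {J : Type*} [Fintype J] (n : ℕ) (hn : 1 ≤ n)
    (χ : J → J → ℝ) (hχ : ∀ i j, χ i j = 0 ∨ χ i j = 1)
    (π : J → ℝ)
    (hMTZ : ∀ i j, i ≠ j → π j ≥ π i + 1 - (n : ℝ) * (1 - χ i j)) :
    ¬ ∃ (k : ℕ) (f : ℕ → J), 1 ≤ k ∧ f k = f 0 ∧
        ∀ m < k, f m ≠ f (m + 1) ∧ χ (f m) (f (m + 1)) = 1 := by
  rintro ⟨k, f, hk, hcyc, h⟩
  have key : ∀ m ≤ k, π (f m) ≥ π (f 0) + m := by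
    intro m hm
    induction m with
    | zero => simp
    | succ m ih =>
      have hm' : m < k := Nat.lt_of_succ_le hm
      obtain ⟨hne, hχ1⟩ := h m hm'
      have := hMTZ _ _ hne
      rw [hχ1] at this
      have := ih (le_of_lt hm')
      push_cast
      linarith
  have := key k le_rfl
  rw [hcyc] at this
  have : (k : ℝ) ≤ 0 := by linarith
  have : (1 : ℝ) ≤ k := by exact_mod_cast hk
  linarith
end

section
/- Let J be a finite set of cardinality n − 1 for a natural number n ≥ 1, and let χ : J × J → {0, 1} be such that the directed graph on J with edge set E = {(i, j) : i ≠ j and χ(i, j) = 1} contains no directed cycle. Then there exists a function π : J → ℝ with 0 ≤ π(j) for all j ∈ J such that for all i, j ∈ J with i ≠ j, π(j) ≥ π(i) + 1 − n·(1 − χ(i, j)). -/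
theorem mtz_completeness {J : Type*} [Fintype J] (n : ℕ) (hn : 1 ≤ n)
    (hcard : Fintype.card J = n - 1)
    (χ : J → J → ℝ) (hχ : ∀ i j, χ i j = 0 ∨ χ i j = 1)
    (hacyclic : ¬ ∃ (k : ℕ) (f : ℕ → J), 1 ≤ k ∧ f k = f 0 ∧
        ∀ m < k, f m ≠ f (m + 1) ∧ χ (f m) (f (m + 1)) = 1) :
    ∃ π : J → ℝ, (∀ j, 0 ≤ π j) ∧
      ∀ i j, i ≠ j → π j ≥ π i + 1 - (n : ℝ) * (1 - χ i j) := by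
  classical
  set R : J → J → Prop := fun i j => i ≠ j ∧ χ i j = 1 with hR
  -- path extraction from transitive closure
  have path : ∀ a b, Relation.TransGen R a b →
      ∃ k, ∃ f : ℕ → J, 1 ≤ k ∧ f 0 = a ∧ f k = b ∧ ∀ m < k, R (f m) (f (m+1)) := by
    intro a b h
    induction h with
    | @single c hc =>
      refine ⟨1, fun m => if m = 0 then a else c, le_refl 1, by simp, by simp, ?_⟩
      intro m hm
      interval_cases m
      simpa using hc
    | @tail b' c h₁ h₂ ih =>
      obtain ⟨k, f, hk, h0, hb, hstep⟩ := ih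
      refine ⟨k + 1, fun m => if m ≤ k then f m else c, by omega, ?_, ?_, ?_⟩
      · simp [h0]
      · simp
      · intro m hm
        by_cases hmk : m < k
        · have : m ≤ k := le_of_lt hmk
          have : m + 1 ≤ k := hmk
          simpa [le_of_lt hmk, this] using hstep m hmk
        · have hmeq : m = k := by omega
          subst hmeq
          simp only [le_refl, if_pos]
          have : ¬ (m + 1 ≤ m) := by omega
          simpa [this, hb] using h₂
  have irrefl : ∀ j, ¬ Relation.TransGen R j j := by
    intro j hj
    obtain ⟨k, f, hk, h0, hb, hstep⟩ := path j j hj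
    exact hacyclic ⟨k, f, hk, by rw [hb, h0], fun m hm => hstep m hm⟩
  set pred : J → Finset J := fun j => Finset.univ.filter (fun i => Relation.TransGen R i j)
    with hpred
  refine ⟨fun j => ((pred j).card : ℝ), fun j => by positivity, ?_⟩
  intro i j hij
  have hself : ∀ a : J, a ∉ pred a := by
    intro a ha
    exact irrefl a (by simpa [hpred] using ha)
  rcases hχ i j with h0 | h1
  · -- no edge: use the global bound
    have hsub : pred i ⊆ Finset.univ.erase i := by
      intro x hx
      refine Finset.mem_erase.mpr ⟨?_, Finset.mem_univ x⟩
      rintro rfl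
      exact hself _ hx
    have hle : (pred i).card ≤ Fintype.card J - 1 := by
      have := Finset.card_le_card hsub
      simpa [Finset.card_erase_of_mem, Finset.card_univ] using this
    have hcard1 : 1 ≤ Fintype.card J := Fintype.card_pos_iff.mpr ⟨i⟩
    have hnat : (pred i).card + 2 ≤ n := by omega
    have hreal : ((pred i).card : ℝ) + 2 ≤ (n : ℝ) := by exact_mod_cast hnat
    have hj0 : (0 : ℝ) ≤ ((pred j).card : ℝ) := by positivity
    rw [h0]
    linarith
  · -- edge i → j : predecessors strictly increase
    have hRij : R i j := ⟨hij, h1⟩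
    have hsub : insert i (pred i) ⊆ pred j := by
      intro x hx
      rcases Finset.mem_insert.mp hx with rfl | hx
      · simp only [hpred, Finset.mem_filter, Finset.mem_univ, true_and]
        exact Relation.TransGen.single hRij
      · simp only [hpred, Finset.mem_filter, Finset.mem_univ, true_and] at hx ⊢
        exact hx.tail hRij
    have hcardle : (pred i).card + 1 ≤ (pred j).card := by
      have := Finset.card_le_card hsub
      rwa [Finset.card_insert_of_notMem (hself i)] at this
    have hreal : ((pred i).card : ℝ) + 1 ≤ ((pred j).card : ℝ) := by exact_mod_cast hcardle
    rw [h1]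
    ring_nf
    linarith
end
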